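/- arXiv:math/0702301 — 2 statements merged into one kernel-verified Lean document; each statement's English description precedes it below -/
import Mathlib

section
/- Let X be an n × p real matrix, let β* ∈ ℝᵖ have support contained in a subset S ⊆ {1,…,p}, let W ∈ ℝⁿ, and set Y = Xβ* + W. Let U ⊆ {1,…,p} and suppose both submatrices X_U and X_S have full column rank. Then ‖Π⊥_U Y‖²_2 − ‖Π⊥_S Y‖²_2 = ‖Π⊥_U ( X_{S\U} β*_{S\U} + W )‖²_2 − ‖Π⊥_S W‖²_2, where β*_{S\U} denotes the subvector of β* indexed by S\U and X_{S\U} the corresponding columns of X. In particular, the least-squares residual of subset U is smaller than that of S if and only if the right-hand side is negative. -/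
/-!
The Gram matrix `X_Vᵀ X_V` is invertible when `X_V` has full column rank, so `Π⊥_V X_V = 0`:
the projection annihilates every linear combination of the columns indexed by `V`. Since `β` is
supported on `S`, the signal `Xβ` lies in the column span of `X_S`, so `Π⊥_S Y = Π⊥_S W`; and
splitting `Xβ = X_U β_U + X_{S\U} β_{S\U}` gives `Π⊥_U Y = Π⊥_U (X_{S\U} β_{S\U} + W)`.
-/

open Matrix

/-- The `n × |V|` submatrix of columns of `A` indexed by `V`. -/
noncomputable def colsOf {n p : ℕ} (A : Fin n → Fin p → ℝ) (V : Finset (Fin p)) :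
    Matrix (Fin n) {j : Fin p // j ∈ V} ℝ :=
  Matrix.of fun i j => A i j.1

/-- `Π⊥_V = I - X_V (X_Vᵀ X_V)⁻¹ X_Vᵀ`, the projection onto the orthogonal complement
of the range of the column submatrix `X_V`. -/
noncomputable def projPerp {n p : ℕ} (A : Fin n → Fin p → ℝ) (V : Finset (Fin p)) :
    Matrix (Fin n) (Fin n) ℝ :=
  1 - colsOf A V * ((colsOf A V)ᵀ * colsOf A V)⁻¹ * (colsOf A V)ᵀ

/-- `Δ(U) = ‖Π⊥_U (X_{S\U} β_{S\U} + W)‖₂² - ‖Π⊥_S W‖₂²`. -/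
noncomputable def Delta {n p : ℕ} (X : Fin n → Fin p → ℝ) (W : Fin n → ℝ)
    (β : Fin p → ℝ) (S U : Finset (Fin p)) : ℝ :=
  ∑ i, ((projPerp X U).mulVec (fun i' => (∑ j ∈ S \ U, X i' j * β j) + W i') i) ^ 2
    - ∑ i, ((projPerp X S).mulVec W i) ^ 2

theorem Matrix.isUnit_of_rank_eq_card {m K : Type*} [Fintype m] [DecidableEq m] [Field K]
    {M : Matrix m m K} (h : M.rank = Fintype.card m) : IsUnit M := by
  rw [← mulVec_surjective_iff_isUnit, ← Matrix.coe_mulVecLin, ← LinearMap.range_eq_top]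
  exact Submodule.eq_top_of_finrank_eq (by rw [Module.finrank_fintype_fun_eq_card]; exact h)

theorem Finset.sum_eq_sum_add_sum_sdiff_of_support_subset {ι M : Type*} [Fintype ι]
    [DecidableEq ι] [AddCommMonoid M] {f : ι → M} {S : Finset ι}
    (hf : ∀ i, f i ≠ 0 → i ∈ S) (U : Finset ι) :
    ∑ i, f i = ∑ i ∈ U, f i + ∑ i ∈ S \ U, f i := by
  rw [← Finset.sum_add_sum_compl U f]
  congr 1
  refine (Finset.sum_subset (fun i hi => ?_) fun i hiU hi => ?_).symm
  · simpa using (Finset.mem_sdiff.mp hi).2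
  · by_contra hfi
    exact hi (Finset.mem_sdiff.mpr ⟨hf i hfi, Finset.mem_compl.mp hiU⟩)

section Projection

variable {n p : ℕ} (A : Fin n → Fin p → ℝ) {V : Finset (Fin p)}

theorem projPerp_mul_colsOf (h : (colsOf A V).rank = V.card) :
    projPerp A V * colsOf A V = 0 := by
  set B := colsOf A V
  have hGram : IsUnit (Bᵀ * B).det := by
    rw [← isUnit_iff_isUnit_det]
    apply isUnit_of_rank_eq_card
    rw [rank_transpose_mul_self, h, Fintype.card_coe]
  calc projPerp A V * B = B - B * ((Bᵀ * B)⁻¹ * (Bᵀ * B)) := by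
        rw [projPerp, Matrix.sub_mul, Matrix.one_mul, Matrix.mul_assoc, Matrix.mul_assoc]
    _ = 0 := by rw [nonsing_inv_mul _ hGram, Matrix.mul_one, sub_self]

theorem projPerp_mulVec_sum_add (h : (colsOf A V).rank = V.card) (c : Fin p → ℝ)
    (v : Fin n → ℝ) :
    (projPerp A V).mulVec (fun i => ∑ j ∈ V, A i j * c j + v i) = (projPerp A V).mulVec v := by
  have hcomb : (fun i => ∑ j ∈ V, A i j * c j) = (colsOf A V).mulVec (fun j => c j) := by
    funext i
    exact (Finset.sum_coe_sort V fun j => A i j * c j).symm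
  change (projPerp A V).mulVec ((fun i => ∑ j ∈ V, A i j * c j) + v) = _
  rw [hcomb, mulVec_add, mulVec_mulVec, projPerp_mul_colsOf A h, zero_mulVec, zero_add]

end Projection

/-- **Difference of least-squares residuals (Lemma 1).**
If `Y = X β + W` with the support of `β` contained in `S`, and the column submatrices
`X_U` and `X_S` have full column rank, then
`‖Π⊥_U Y‖₂² - ‖Π⊥_S Y‖₂² = ‖Π⊥_U (X_{S\U} β_{S\U} + W)‖₂² - ‖Π⊥_S W‖₂²`; in particular,
the least-squares residual of `U` is smaller than that of `S` iff the right-hand side is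
negative. -/
theorem residual_difference_formula {n p : ℕ} (X : Fin n → Fin p → ℝ) (β : Fin p → ℝ)
    (W : Fin n → ℝ) (S U : Finset (Fin p))
    (hsupp : ∀ i, β i ≠ 0 → i ∈ S)
    (hrU : (colsOf X U).rank = U.card)
    (hrS : (colsOf X S).rank = S.card) :
    (∑ i, ((projPerp X U).mulVec (fun i' => (∑ j, X i' j * β j) + W i') i) ^ 2
        - ∑ i, ((projPerp X S).mulVec (fun i' => (∑ j, X i' j * β j) + W i') i) ^ 2
      = Delta X W β S U) ∧
    (∑ i, ((projPerp X U).mulVec (fun i' => (∑ j, X i' j * β j) + W i') i) ^ 2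
        < ∑ i, ((projPerp X S).mulVec (fun i' => (∑ j, X i' j * β j) + W i') i) ^ 2
      ↔ Delta X W β S U < 0) := by
  have hsplit (T : Finset (Fin p)) (i : Fin n) :
      ∑ j, X i j * β j = ∑ j ∈ T, X i j * β j + ∑ j ∈ S \ T, X i j * β j :=
    Finset.sum_eq_sum_add_sum_sdiff_of_support_subset
      (fun j hj => hsupp j (right_ne_zero_of_mul hj)) T
  have hS : (projPerp X S).mulVec (fun i => ∑ j, X i j * β j + W i)
      = (projPerp X S).mulVec W := by
    simp only [hsplit S, Finset.sdiff_self, Finset.sum_empty, add_zero]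
    exact projPerp_mulVec_sum_add X hrS β W
  have hU : (projPerp X U).mulVec (fun i => ∑ j, X i j * β j + W i)
      = (projPerp X U).mulVec (fun i => ∑ j ∈ S \ U, X i j * β j + W i) := by
    simp only [hsplit U, add_assoc]
    exact projPerp_mulVec_sum_add X hrU β _
  rw [hU, hS]
  exact ⟨rfl, sub_neg.symm⟩
end

section
/- Fano-method lower bound: let P_1, …, P_N be probability measures on a common measurable space Ω with N ≥ 3, and suppose all Kullback–Leibler divergences D(P_i ‖ P_j) are finite. Then for every measurable map ψ : Ω → {1, …, N}, the average probability of error satisfies (1/N) Σ_{i=1}^{N} P_i[ ψ ≠ i ] ≥ 1 − ( (1/N²) Σ_{i,j=1}^{N} D(P_i ‖ P_j) + log 2 ) / log(N − 1). -/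
open MeasureTheory

/-- The Kullback–Leibler divergence `D(P ‖ Q) = ∫ log (dP/dQ) dP` (natural logarithm),
as a real number.  This is the usual KL divergence whenever `P ≪ Q` and the integrand is
integrable. -/
noncomputable def klDivR {Ω : Type*} [MeasurableSpace Ω] (P Q : Measure Ω) : ℝ :=
  ∫ ω, Real.log (P.rnDeriv Q ω).toReal ∂P

open Finset
open scoped ENNReal

lemma gibbs_term {p m : ℝ} (hp : 0 ≤ p) (hm : 0 < m) :
    p - m ≤ p * Real.log (p / m) := by
  rcases eq_or_lt_of_le hp with h | h
  · simp [← h, hm.le]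
  · have h2 := Real.log_le_sub_one_of_pos (show 0 < m / p by positivity)
    rw [Real.log_div hm.ne' h.ne'] at h2
    have : 1 - m / p ≤ Real.log p - Real.log m := by linarith
    have := mul_le_mul_of_nonneg_left this hp
    rw [mul_sub, mul_sub, mul_one, mul_div_cancel₀ _ h.ne'] at this
    rw [Real.log_div h.ne' hm.ne']; linarith

lemma fano_discrete {N : ℕ} (hN : 3 ≤ N) (p : Fin N → Fin N → ℝ) (ν : Fin N → ℝ)
    (hp : ∀ i k, 0 ≤ p i k) (hrow : ∀ i, ∑ k, p i k = 1)
    (hν : ∀ k, ν k = (1/(N:ℝ)) * ∑ i, p i k) :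
    (N:ℝ) * (Real.log N - Real.log 2) - (∑ i, (1 - p i i)) * Real.log ((N:ℝ)-1)
      ≤ ∑ i, ∑ k, p i k * Real.log (p i k / ν k) := by
  have hNR : (0:ℝ) < N := by positivity
  have hN1 : (0:ℝ) < (N:ℝ) - 1 := by
    have : (3:ℝ) ≤ N := by exact_mod_cast hN
    linarith
  set g : Fin N → Fin N → ℝ := fun i k => if i = k then 1/2 else 1/(2*((N:ℝ)-1)) with hg
  have hgpos : ∀ i k, 0 < g i k := by
    intro i k; simp only [hg]; split <;> positivity
  set m : Fin N → Fin N → ℝ := fun i k => (N:ℝ) * ν k * g i k with hm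
  have hνnn : ∀ k, 0 ≤ ν k := by
    intro k; rw [hν]
    exact mul_nonneg (by positivity) (Finset.sum_nonneg fun i _ => hp i k)
  have hmnn : ∀ i k, 0 ≤ m i k := fun i k => by
    have := hνnn k; have := (hgpos i k).le; simp only [hm]; positivity
  -- termwise inequality
  have key : ∀ i k, (p i k - m i k) + p i k * Real.log ((N:ℝ) * g i k)
      ≤ p i k * Real.log (p i k / ν k) := by
    intro i k
    rcases eq_or_lt_of_le (hp i k) with h | h
    · simp only [← h, zero_mul, zero_sub, add_zero, zero_add]
      linarith [hmnn i k]
    · have hνpos : 0 < ν k := by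
        rw [hν]
        have hle : p i k ≤ ∑ i', p i' k :=
          Finset.single_le_sum (fun i' _ => hp i' k) (Finset.mem_univ i)
        have : 0 < ∑ i', p i' k := lt_of_lt_of_le h hle
        positivity
      have hmpos : 0 < m i k := by
        have := hgpos i k; simp only [hm]; positivity
      have hsplit : Real.log (p i k / ν k)
          = Real.log (p i k / m i k) + Real.log ((N:ℝ) * g i k) := by
        rw [Real.log_div h.ne' hνpos.ne', Real.log_div h.ne' hmpos.ne',
          Real.log_mul hNR.ne' (hgpos i k).ne', hm]
        simp only
        rw [Real.log_mul (by positivity : ((N:ℝ) * ν k) ≠ 0) (hgpos i k).ne',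
          Real.log_mul hNR.ne' hνpos.ne']
        ring
      rw [hsplit, mul_add]
      have := gibbs_term (hp i k) hmpos
      linarith
  -- sums
  have h1 : ∑ i : Fin N, ∑ k, p i k = (N:ℝ) := by
    simp [hrow, Finset.card_univ]
  have hgsum : ∀ k, ∑ i, g i k = 1 := by
    intro k
    rw [← Finset.add_sum_erase _ _ (Finset.mem_univ k)]
    have : ∀ i ∈ Finset.univ.erase k, g i k = 1/(2*((N:ℝ)-1)) := by
      intro i hi
      simp only [hg]
      rw [if_neg (Finset.ne_of_mem_erase hi)]
    rw [Finset.sum_congr rfl this, Finset.sum_const, Finset.card_erase_of_mem (Finset.mem_univ k),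
      Finset.card_univ, Fintype.card_fin, nsmul_eq_mul]
    simp only [hg, if_pos rfl]
    have : ((N - 1 : ℕ) : ℝ) = (N:ℝ) - 1 := by
      have : 1 ≤ N := by omega
      push_cast [this]; ring
    rw [this]
    field_simp
    ring
  have hνsum : ∑ k, ν k = 1 := by
    simp_rw [hν, ← Finset.mul_sum]
    rw [Finset.sum_comm, h1]
    field_simp
  have h2 : ∑ i : Fin N, ∑ k, m i k = (N:ℝ) := by
    rw [Finset.sum_comm]
    have hmk : ∀ k, ∑ i, m i k = (N:ℝ) * ν k := by
      intro k
      simp only [hm]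
      rw [← Finset.mul_sum, hgsum k, mul_one]
    simp_rw [hmk]
    rw [← Finset.mul_sum, hνsum, mul_one]
  -- the log(N g) sums
  have h3 : ∀ i, ∑ k, p i k * Real.log ((N:ℝ) * g i k)
      = (Real.log N - Real.log 2) - (1 - p i i) * Real.log ((N:ℝ)-1) := by
    intro i
    have hlog1 : Real.log ((N:ℝ) * g i i) = Real.log N - Real.log 2 := by
      simp only [hg, if_pos rfl]
      rw [show (N:ℝ) * (1/2) = (N:ℝ)/2 by ring, Real.log_div hNR.ne' two_ne_zero]
    have hlog2 : ∀ k, i ≠ k → Real.log ((N:ℝ) * g i k)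
        = Real.log N - Real.log 2 - Real.log ((N:ℝ)-1) := by
      intro k hik
      simp only [hg, if_neg hik]
      rw [show (N:ℝ) * (1/(2*((N:ℝ)-1))) = (N:ℝ)/(2*((N:ℝ)-1)) by ring,
        Real.log_div hNR.ne' (by positivity), Real.log_mul two_ne_zero hN1.ne']
      ring
    rw [← Finset.add_sum_erase _ _ (Finset.mem_univ i), hlog1]
    have : ∀ k ∈ Finset.univ.erase i, p i k * Real.log ((N:ℝ) * g i k)
        = p i k * (Real.log N - Real.log 2 - Real.log ((N:ℝ)-1)) := by
      intro k hk
      rw [hlog2 k (Ne.symm (Finset.ne_of_mem_erase hk))]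
    rw [Finset.sum_congr rfl this, ← Finset.sum_mul]
    have herase : ∑ k ∈ Finset.univ.erase i, p i k = 1 - p i i := by
      have := Finset.add_sum_erase Finset.univ (fun k => p i k) (Finset.mem_univ i)
      rw [hrow i] at this
      linarith
    rw [herase]
    ring
  have hsum3 : ∑ i : Fin N, ((Real.log N - Real.log 2) - (1 - p i i) * Real.log ((N:ℝ)-1))
      = (N:ℝ)*(Real.log N - Real.log 2) - (∑ i, (1 - p i i)) * Real.log ((N:ℝ)-1) := by
    rw [Finset.sum_sub_distrib, Finset.sum_const, Finset.card_univ, Fintype.card_fin,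
      nsmul_eq_mul, ← Finset.sum_mul]
  -- assemble
  calc (N:ℝ) * (Real.log N - Real.log 2) - (∑ i, (1 - p i i)) * Real.log ((N:ℝ)-1)
      = ∑ i : Fin N, ((∑ k, p i k - ∑ k, m i k)
          + ((Real.log N - Real.log 2) - (1 - p i i) * Real.log ((N:ℝ)-1))) := by
        have h12 : ∑ i : Fin N, (∑ k, p i k - ∑ k, m i k) = 0 := by
          rw [Finset.sum_sub_distrib, h1, h2]; ring
        rw [Finset.sum_add_distrib, h12, hsum3, zero_add]
    _ = ∑ i : Fin N, ∑ k, ((p i k - m i k) + p i k * Real.log ((N:ℝ) * g i k)) := by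
        apply Finset.sum_congr rfl
        intro i _
        rw [← h3 i, ← Finset.sum_sub_distrib, ← Finset.sum_add_distrib]
    _ ≤ ∑ i : Fin N, ∑ k, p i k * Real.log (p i k / ν k) := by
        apply Finset.sum_le_sum
        intro i _
        exact Finset.sum_le_sum fun k _ => key i k

lemma log_le_tangent {x c : ℝ} (hx : 0 < x) (hc : 0 < c) :
    Real.log x ≤ Real.log c + (x - c) / c := by
  have h := Real.log_le_sub_one_of_pos (show 0 < x / c by positivity)
  rw [Real.log_div hx.ne' hc.ne'] at h
  have : Real.log x - Real.log c ≤ (x - c) / c := by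
    calc Real.log x - Real.log c ≤ x / c - 1 := h
      _ = (x - c)/c := by field_simp
  linarith

lemma avg_log_le_log_avg {N : ℕ} (hN : 0 < N) (t : Fin N → ℝ) (ht : ∀ j, 0 < t j) :
    (1 / (N:ℝ)) * ∑ j, Real.log (t j) ≤ Real.log ((1 / (N:ℝ)) * ∑ j, t j) := by
  have hNR : (0:ℝ) < N := Nat.cast_pos.2 hN
  have hw : ∀ j ∈ (Finset.univ : Finset (Fin N)), (0:ℝ) ≤ 1/(N:ℝ) := fun _ _ => by positivity
  have hws : ∑ _j : Fin N, (1/(N:ℝ)) = 1 := by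
    rw [Finset.sum_const, Finset.card_univ, Fintype.card_fin, nsmul_eq_mul]
    field_simp
  have hz : ∀ j ∈ (Finset.univ : Finset (Fin N)), (0:ℝ) ≤ t j := fun j _ => (ht j).le
  have key := Real.geom_mean_le_arith_mean_weighted Finset.univ (fun _ => 1/(N:ℝ)) t hw hws hz
  have hprodpos : 0 < ∏ j, t j ^ (1/(N:ℝ)) :=
    Finset.prod_pos fun j _ => Real.rpow_pos_of_pos (ht j) _
  have hlog := Real.log_le_log hprodpos key
  rw [Real.log_prod (fun j _ => (Real.rpow_pos_of_pos (ht j) _).ne')] at hlog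
  simp_rw [Real.log_rpow (ht _)] at hlog
  calc (1 / (N:ℝ)) * ∑ j, Real.log (t j) = ∑ j, 1/(N:ℝ) * Real.log (t j) := by rw [Finset.mul_sum]
    _ ≤ Real.log (∑ j, 1/(N:ℝ) * t j) := hlog
    _ = Real.log ((1 / (N:ℝ)) * ∑ j, t j) := by rw [Finset.mul_sum]

lemma kl_partition_bound {Ω : Type*} [MeasurableSpace Ω] {N : ℕ} (hN : 3 ≤ N)
    (P : Fin N → Measure Ω) (hP : ∀ i, IsProbabilityMeasure (P i))
    (hac : ∀ i j, P i ≪ P j)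
    (hint : ∀ i j, Integrable (fun ω => Real.log ((P i).rnDeriv (P j) ω).toReal) (P i))
    (A : Fin N → Set Ω) (hA : ∀ k, MeasurableSet (A k))
    (hdisj : Pairwise (Function.onFun Disjoint A))
    (hcover : (⋃ k, A k) = Set.univ) (i : Fin N) :
    ∑ k, ((P i) (A k)).toReal * Real.log (((P i) (A k)).toReal /
        ((1/(N:ℝ)) * ∑ j, ((P j) (A k)).toReal))
      ≤ (1/(N:ℝ)) * ∑ j, klDivR (P i) (P j) := by
  have hNpos : 0 < N := by omega
  have hNR : (0:ℝ) < N := by exact_mod_cast hNpos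
  have hNE : ((N:ℝ≥0∞)) ≠ 0 := by exact_mod_cast hNpos.ne'
  have hNEtop : ((N:ℝ≥0∞)) ≠ ⊤ := ENNReal.natCast_ne_top N
  haveI := hP i
  haveI : Nonempty (Fin N) := ⟨⟨0, hNpos⟩⟩
  set Qbar : Measure Ω := ((N:ℝ≥0∞))⁻¹ • ∑ j, P j with hQ
  set f : Ω → ℝ≥0∞ := fun ω => (N:ℝ≥0∞)⁻¹ * ∑ j, (P j).rnDeriv (P i) ω with hf
  have hfmeas : Measurable f := by
    apply Measurable.const_mul
    exact Finset.measurable_sum _ (fun j _ => Measure.measurable_rnDeriv _ _)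
  have hQd : Qbar = (P i).withDensity f := by
    ext s hs
    rw [hQ, Measure.smul_apply, Measure.finset_sum_apply, withDensity_apply _ hs, hf]
    rw [lintegral_const_mul _ (Finset.measurable_sum _ (fun j _ => Measure.measurable_rnDeriv _ _)),
      lintegral_finset_sum _ (fun j _ => Measure.measurable_rnDeriv _ _)]
    simp_rw [Measure.setLIntegral_rnDeriv (hac _ i) s]
    rfl
  have hQac : Qbar ≪ P i := hQd ▸ withDensity_absolutelyContinuous _ _
  haveI hQfin : IsFiniteMeasure Qbar := by
    constructor
    rw [hQ, Measure.smul_apply, Measure.finset_sum_apply]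
    simp only [measure_univ, Finset.sum_const, Finset.card_univ, Fintype.card_fin, nsmul_eq_mul,
      mul_one, smul_eq_mul]
    rw [ENNReal.inv_mul_cancel hNE hNEtop]
    exact ENNReal.one_lt_top
  have hgAE : Qbar.rnDeriv (P i) =ᵐ[P i] f := by
    rw [hQd]; exact Measure.rnDeriv_withDensity _ hfmeas
  set G : Ω → ℝ := fun ω => (Qbar.rnDeriv (P i) ω).toReal with hG
  have hGmeas : Measurable G := (Measure.measurable_rnDeriv _ _).ennreal_toReal
  -- a.e. facts
  have haeall : ∀ᵐ ω ∂(P i), ∀ j : Fin N, 0 < (P j).rnDeriv (P i) ω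
      ∧ (P j).rnDeriv (P i) ω < ⊤
      ∧ ((P i).rnDeriv (P j) ω)⁻¹ = (P j).rnDeriv (P i) ω := by
    rw [ae_all_iff]
    intro j
    filter_upwards [Measure.rnDeriv_pos' (hac i j), Measure.rnDeriv_lt_top (P j) (P i),
      Measure.inv_rnDeriv (hac i j)] with ω h1 h2 h3
    exact ⟨h1, h2, h3⟩
  have hGrep : ∀ᵐ ω ∂(P i),
      G ω = (1/(N:ℝ)) * ∑ j, ((P j).rnDeriv (P i) ω).toReal ∧ 0 < G ω ∧
      -Real.log (G ω) ≤ (1/(N:ℝ)) * ∑ j, Real.log (((P i).rnDeriv (P j) ω).toReal) := by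
    filter_upwards [hgAE, haeall] with ω hωg hωall
    have ht : ∀ j : Fin N, 0 < ((P j).rnDeriv (P i) ω).toReal := fun j =>
      ENNReal.toReal_pos (hωall j).1.ne' (hωall j).2.1.ne
    have hrep : G ω = (1/(N:ℝ)) * ∑ j, ((P j).rnDeriv (P i) ω).toReal := by
      rw [hG]
      simp only [hωg, hf]
      rw [ENNReal.toReal_mul, ENNReal.toReal_sum (fun j _ => (hωall j).2.1.ne)]
      congr 1
      rw [ENNReal.toReal_inv, ENNReal.toReal_natCast, one_div]
    refine ⟨hrep, ?_, ?_⟩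
    · rw [hrep]
      have : 0 < ∑ j, ((P j).rnDeriv (P i) ω).toReal :=
        Finset.sum_pos (fun j _ => ht j) Finset.univ_nonempty
      positivity
    · have hconc := avg_log_le_log_avg hNpos (fun j => ((P j).rnDeriv (P i) ω).toReal) ht
      rw [← hrep] at hconc
      have hflip : ∀ j : Fin N, Real.log (((P j).rnDeriv (P i) ω).toReal)
          = -Real.log (((P i).rnDeriv (P j) ω).toReal) := by
        intro j
        rw [← (hωall j).2.2, ENNReal.toReal_inv, Real.log_inv]
      simp_rw [hflip] at hconc
      rw [Finset.sum_neg_distrib, mul_neg] at hconc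
      linarith
  -- integrability
  have hGint : Integrable G (P i) := Measure.integrable_toReal_rnDeriv
  set L : Ω → ℝ := fun ω => (1/(N:ℝ)) * ∑ j, Real.log (((P i).rnDeriv (P j) ω).toReal) with hL
  have hLint : Integrable L (P i) := by
    apply Integrable.const_mul
    exact integrable_finset_sum _ (fun j _ => hint i j)
  have hnegint : Integrable (fun ω => -Real.log (G ω)) (P i) := by
    apply integrable_of_le_of_le (g₁ := fun ω => 1 - G ω) (g₂ := L)
    · exact ((Real.measurable_log.comp hGmeas).neg).aestronglyMeasurable
    · filter_upwards [hGrep] with ω hω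
      have := Real.log_le_sub_one_of_pos hω.2.1
      linarith
    · filter_upwards [hGrep] with ω hω
      exact hω.2.2
    · exact (integrable_const 1).sub hGint
    · exact hLint
  -- ∫ -log G ≤ (1/N) ∑ klDivR
  have hIntLe : ∫ ω, -Real.log (G ω) ∂(P i) ≤ (1/(N:ℝ)) * ∑ j, klDivR (P i) (P j) := by
    have h1 := integral_mono_ae hnegint hLint (by
      filter_upwards [hGrep] with ω hω using hω.2.2)
    rw [hL] at h1
    rwa [integral_const_mul, integral_finset_sum _ (fun j _ => hint i j)] at h1
  -- partition
  have hpart : ∫ ω, -Real.log (G ω) ∂(P i) = ∑ k, ∫ ω in A k, -Real.log (G ω) ∂(P i) := by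
    have := integral_iUnion hA hdisj (hnegint.integrableOn (s := ⋃ k, A k))
    rw [hcover, Measure.restrict_univ] at this
    rw [this, tsum_fintype]
  -- per-k bound
  have hperk : ∀ k, ((P i) (A k)).toReal * Real.log (((P i) (A k)).toReal /
      ((1/(N:ℝ)) * ∑ j, ((P j) (A k)).toReal)) ≤ ∫ ω in A k, -Real.log (G ω) ∂(P i) := by
    intro k
    set pk : ℝ := ((P i) (A k)).toReal with hpk
    set νk : ℝ := (1/(N:ℝ)) * ∑ j, ((P j) (A k)).toReal with hνk
    have hνknn : 0 ≤ νk := by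
      rw [hνk]
      exact mul_nonneg (by positivity) (Finset.sum_nonneg fun j _ => ENNReal.toReal_nonneg)
    have hQA : (Qbar (A k)).toReal = νk := by
      rw [hQ, Measure.smul_apply, Measure.finset_sum_apply, smul_eq_mul, ENNReal.toReal_mul,
        ENNReal.toReal_sum (fun j _ => (measure_lt_top (P j) _).ne), hνk,
        ENNReal.toReal_inv, ENNReal.toReal_natCast, one_div]
    rcases eq_or_lt_of_le (ENNReal.toReal_nonneg : (0:ℝ) ≤ pk) with h0 | hppos
    · have hnull : (P i) (A k) = 0 := by
        rcases (ENNReal.toReal_eq_zero_iff _).mp h0.symm with h | h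
        · exact h
        · exact absurd h (measure_ne_top _ _)
      rw [show pk = 0 from h0.symm, zero_mul]
      have hres : (P i).restrict (A k) = 0 := Measure.restrict_eq_zero.mpr hnull
      rw [hres, integral_zero_measure]
    · have hνkpos : 0 < νk := by
        rw [hνk]
        have hle : pk ≤ ∑ j, ((P j) (A k)).toReal :=
          Finset.single_le_sum (f := fun j => ((P j) (A k)).toReal)
            (fun j _ => ENNReal.toReal_nonneg) (Finset.mem_univ i)
        have hs : 0 < ∑ j, ((P j) (A k)).toReal := lt_of_lt_of_le hppos hle
        positivity
      set c : ℝ := νk / pk with hc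
      have hcpos : 0 < c := div_pos hνkpos hppos
      have hGset : ∫ ω in A k, G ω ∂(P i) = νk :=
        (Measure.setIntegral_toReal_rnDeriv hQac (A k)).trans hQA
      have hptwise : ∀ᵐ ω ∂(P i), Real.log (G ω) ≤ Real.log c + (G ω - c)/c := by
        filter_upwards [hGrep] with ω hω
        exact log_le_tangent hω.2.1 hcpos
      have hlogGint : Integrable (fun ω => Real.log (G ω)) (P i) := by
        have heq : (fun ω => Real.log (G ω)) = fun ω => -(-Real.log (G ω)) := by
          funext ω; ring
        rw [heq]
        exact hnegint.neg
      have hintsub : Integrable (fun ω => (G ω - c)/c) (P i) := by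
        have h := (hGint.sub (integrable_const c)).div_const c
        simpa [Pi.sub_apply] using h
      have h1 : ∫ ω in A k, Real.log (G ω) ∂(P i)
          ≤ ∫ ω in A k, (Real.log c + (G ω - c)/c) ∂(P i) := by
        refine setIntegral_mono_ae hlogGint.integrableOn ?_ hptwise
        exact ((integrable_const _).add hintsub).integrableOn
      have h2 : ∫ ω in A k, (Real.log c + (G ω - c)/c) ∂(P i) = pk * Real.log c := by
        rw [integral_add (integrableOn_const (C := Real.log c) (measure_lt_top _ _).ne)
            hintsub.integrableOn,
          setIntegral_const, integral_div,
          integral_sub hGint.integrableOn (integrableOn_const (C := c) (measure_lt_top _ _).ne),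
          hGset, setIntegral_const]
        have hpc : pk * c = νk := by rw [hc]; field_simp; exact div_self hppos.ne'
        rw [smul_eq_mul, smul_eq_mul, measureReal_def, ← hpk, hpc, sub_self, zero_div, add_zero]
      have h4 : Real.log c = - Real.log (pk / νk) := by
        rw [hc, Real.log_div hνkpos.ne' hppos.ne', Real.log_div hppos.ne' hνkpos.ne']; ring
      calc pk * Real.log (pk/νk) = -(pk * Real.log c) := by rw [h4]; ring
        _ ≤ -∫ ω in A k, Real.log (G ω) ∂(P i) := by
            have := h1.trans_eq h2; linarith
        _ = ∫ ω in A k, -Real.log (G ω) ∂(P i) := (integral_neg _).symm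
  exact le_trans (Finset.sum_le_sum fun k _ => hperk k) (hpart ▸ hIntLe)

/-- **Fano-method lower bound.**
Let `P 1, …, P N` be probability measures (`N ≥ 3`) with all KL divergences finite (i.e.
`P i ≪ P j` with integrable log-likelihood ratios).  Then any measurable test
`ψ : Ω → {1,…,N}` has average error
`(1/N) ∑ᵢ P i [ψ ≠ i] ≥ 1 - ((1/N²) ∑_{i,j} D(P i ‖ P j) + log 2) / log (N-1)`. -/
theorem fano_lower_bound {Ω : Type*} [MeasurableSpace Ω] (N : ℕ) (hN : 3 ≤ N)
    (P : Fin N → Measure Ω) (hP : ∀ i, IsProbabilityMeasure (P i))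
    (hac : ∀ i j, P i ≪ P j)
    (hint : ∀ i j, Integrable (fun ω => Real.log ((P i).rnDeriv (P j) ω).toReal) (P i))
    (ψ : Ω → Fin N) (hψ : Measurable ψ) :
    1 - ((1 / (N : ℝ) ^ 2) * (∑ i, ∑ j, klDivR (P i) (P j)) + Real.log 2)
          / Real.log ((N : ℝ) - 1)
      ≤ (1 / (N : ℝ)) * ∑ i, ((P i) {ω | ψ ω ≠ i}).toReal := by
  classical
  have hNpos : 0 < N := by omega
  have hNR : (0:ℝ) < N := by exact_mod_cast hNpos
  have hN3 : (3:ℝ) ≤ (N:ℝ) := by exact_mod_cast hN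
  have hLpos : 0 < Real.log ((N:ℝ) - 1) := Real.log_pos (by linarith)
  set L : ℝ := Real.log ((N:ℝ) - 1) with hLdef
  -- the partition induced by ψ
  set A : Fin N → Set Ω := fun k => ψ ⁻¹' {k} with hA
  have hAm : ∀ k, MeasurableSet (A k) := fun k => hψ (measurableSet_singleton k)
  have hdisj : Pairwise (Function.onFun Disjoint A) := by
    intro a b hab
    simp only [Function.onFun, hA]
    apply Set.disjoint_left.mpr
    intro ω h1 h2
    simp only [Set.mem_preimage, Set.mem_singleton_iff] at h1 h2
    exact hab (h1 ▸ h2 ▸ rfl)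
  have hcover : (⋃ k, A k) = Set.univ := by
    ext ω; simp [hA]
  -- discrete data
  set p : Fin N → Fin N → ℝ := fun i k => ((P i) (A k)).toReal with hp
  have hpnn : ∀ i k, 0 ≤ p i k := fun i k => ENNReal.toReal_nonneg
  have hrow : ∀ i, ∑ k, p i k = 1 := by
    intro i
    haveI := hP i
    have hU : (P i) (⋃ k, A k) = ∑ k, (P i) (A k) := by
      rw [measure_iUnion hdisj hAm, tsum_fintype]
    rw [hp]
    rw [← ENNReal.toReal_sum (fun k _ => measure_ne_top _ _), ← hU, hcover, measure_univ,
      ENNReal.toReal_one]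
  set ν : Fin N → ℝ := fun k => (1/(N:ℝ)) * ∑ j, p j k with hν
  -- measure-theoretic bound per i
  have hkey : ∀ i, ∑ k, p i k * Real.log (p i k / ν k)
      ≤ (1/(N:ℝ)) * ∑ j, klDivR (P i) (P j) := by
    intro i
    exact kl_partition_bound hN P hP hac hint A hAm hdisj hcover i
  -- discrete Fano bound
  have hdisc := fano_discrete hN p ν hpnn hrow (fun k => rfl)
  rw [← hLdef] at hdisc
  -- combine
  set K : ℝ := ∑ i, ∑ j, klDivR (P i) (P j) with hK
  have hsum_key : ∑ i, ∑ k, p i k * Real.log (p i k / ν k) ≤ (1/(N:ℝ)) * K := by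
    calc ∑ i, ∑ k, p i k * Real.log (p i k / ν k)
        ≤ ∑ i, ((1/(N:ℝ)) * ∑ j, klDivR (P i) (P j)) := Finset.sum_le_sum fun i _ => hkey i
      _ = (1/(N:ℝ)) * K := by rw [hK, Finset.mul_sum]
  set E : ℝ := ∑ i, (1 - p i i) with hE
  have htot : (N:ℝ) * (Real.log N - Real.log 2) - E * L ≤ (1/(N:ℝ)) * K :=
    le_trans hdisc hsum_key
  have hEnn : 0 ≤ E := by
    rw [hE]
    apply Finset.sum_nonneg
    intro i _
    have : p i i ≤ 1 := by
      rw [← hrow i]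
      exact Finset.single_le_sum (fun k _ => hpnn i k) (Finset.mem_univ i)
    linarith
  -- identify goal RHS with E/N
  have hRHS : ∑ i, ((P i) {ω | ψ ω ≠ i}).toReal = E := by
    rw [hE]
    apply Finset.sum_congr rfl
    intro i _
    haveI := hP i
    have hcompl : {ω | ψ ω ≠ i} = (A i)ᶜ := by
      ext ω; simp [hA]
    rw [hcompl, measure_compl (hAm i) (measure_ne_top _ _), measure_univ,
      ENNReal.toReal_sub_of_le prob_le_one ENNReal.one_ne_top, ENNReal.toReal_one]
  -- main scalar inequality
  have hlogN : L ≤ Real.log N := Real.log_le_log (by linarith) (by linarith)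
  have h5 := mul_le_mul_of_nonneg_left htot (show (0:ℝ) ≤ 1/(N:ℝ) by positivity)
  have h6 : (1/(N:ℝ)) * ((N:ℝ) * (Real.log N - Real.log 2) - E * L)
      = (Real.log N - Real.log 2) - ((1/(N:ℝ)) * E) * L := by
    field_simp
  have h7 : (1/(N:ℝ)) * ((1/(N:ℝ)) * K) = (1/(N:ℝ)^2) * K := by ring
  rw [h6, h7] at h5
  have hmain : (1 - (1/(N:ℝ)) * E) * L ≤ (1/(N:ℝ)^2) * K + Real.log 2 := by
    have hexp : (1 - (1/(N:ℝ)) * E) * L = L - ((1/(N:ℝ)) * E) * L := by ring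
    rw [hexp]
    linarith
  have h8 : 1 - (1/(N:ℝ)) * E ≤ ((1/(N:ℝ)^2) * K + Real.log 2) / L :=
    (le_div_iff₀ hLpos).mpr hmain
  rw [hRHS]
  linarith
end
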